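/- arXiv:1411.1100 — 2 statements merged into one kernel-verified Lean document; each statement's English description precedes it below -/
import Mathlib

section
/- Suppose there exists a constant C ≥ 0 such that for all finite families T₁,...,Tₘ in a set M of continuous linear operators from X to Y and all x₁,...,xₘ ∈ X one has (∑ᵢ ‖Tᵢ(xᵢ)‖^p)^{1/p} ≤ C · sup_{φ ∈ B_{X*}} (∑ᵢ |φ(xᵢ)|^p)^{1/p}. Then M is uniformly dominated: there is a positive finite Borel measure μ on B_{X*} (with μ(B_{X*}) ≤ C^p) such that ‖T(x)‖^p ≤ ∫_{B_{X*}} |φ(x)|^p dμ(φ) for all T ∈ M and x ∈ X. -/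
open MeasureTheory

noncomputable section

variable {X : Type*} [NormedAddCommGroup X] [NormedSpace ℝ X] [CompleteSpace X]
variable {Y : Type*} [NormedAddCommGroup Y] [NormedSpace ℝ Y] [CompleteSpace Y]

/-- The closed unit ball of the dual of `X`, with the weak-star topology. -/
def dualBall (X : Type*) [NormedAddCommGroup X] [NormedSpace ℝ X] : Set (WeakDual ℝ X) :=
  {φ | ∀ x : X, ‖φ x‖ ≤ ‖x‖}

instance (X : Type*) [NormedAddCommGroup X] [NormedSpace ℝ X] :
    MeasurableSpace (dualBall X) := borel _

instance (X : Type*) [NormedAddCommGroup X] [NormedSpace ℝ X] :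
    BorelSpace (dualBall X) := ⟨rfl⟩

/-- `T` satisfies the absolutely `p`-summing inequality with constant `C`. -/
def SummingWith (p : ℝ) (T : X →L[ℝ] Y) (C : ℝ) : Prop :=
  ∀ (m : ℕ) (x : Fin m → X),
    (∑ i, ‖T (x i)‖ ^ p) ^ (1 / p) ≤
      C * ⨆ φ : dualBall X, (∑ i, ‖(φ : WeakDual ℝ X) (x i)‖ ^ p) ^ (1 / p)

/-- `T` is absolutely `p`-summing. -/
def AbsolutelySumming (p : ℝ) (T : X →L[ℝ] Y) : Prop :=
  ∃ C : ℝ, 0 ≤ C ∧ SummingWith p T C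

/-- The absolutely `p`-summing norm `π_p(T)`. -/
def piNorm (p : ℝ) (T : X →L[ℝ] Y) : ℝ :=
  sInf {C : ℝ | 0 ≤ C ∧ SummingWith p T C}

/-- `M` is uniformly dominated by the measure `μ` on the dual unit ball. -/
def UniformlyDominatedBy (p : ℝ) (M : Set (X →L[ℝ] Y)) (μ : Measure (dualBall X)) : Prop :=
  ∀ T ∈ M, ∀ x : X, ‖T x‖ ^ p ≤ ∫ φ : dualBall X, ‖(φ : WeakDual ℝ X) x‖ ^ p ∂μ

/-!
Pietsch's argument. For `T ∈ M` and `x ∈ X` consider the continuous function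
`φ ↦ ‖T x‖ ^ p - C ^ p * |φ x| ^ p` on the weak-star compact ball `B_{X*}`; the pair `(T, x)` is
dominated by `C ^ p • μ` exactly when its `μ`-integral is `≤ 0`. A nonnegative combination of
such functions is again a finite sum of them (replace `x` by `c ^ (1 / p) • x`), and the summing
inequality, evaluated at a `φ` maximising `∑ |φ xᵢ| ^ p`, makes every such sum `≤ 0` somewhere.
So the cone they span misses the open cone of strictly positive functions; Hahn–Banach separates
the two by a positive functional, and Riesz–Markov–Kakutani turns it into a probability measure.
-/

open Set
open scoped CompactlySupported

section CompactSpace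

variable {K : Type*} [TopologicalSpace K] [CompactSpace K]

theorem ContinuousMap.convex_setOf_forall_pos {K : Type*} [TopologicalSpace K] :
    Convex ℝ {g : C(K, ℝ) | ∀ x, 0 < g x} := fun g₁ hg₁ g₂ hg₂ a b ha hb _ x => by
  simp only [ContinuousMap.add_apply, ContinuousMap.smul_apply, smul_eq_mul]
  rcases ha.eq_or_lt with rfl | ha
  · simp_all
  · exact add_pos_of_pos_of_nonneg (mul_pos ha (hg₁ x)) (mul_nonneg hb (hg₂ x).le)

theorem ContinuousMap.isOpen_setOf_forall_pos : IsOpen {g : C(K, ℝ) | ∀ x, 0 < g x} := by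
  simpa [MapsTo] using
    ContinuousMap.isOpen_setOfPred_mapsTo isCompact_univ (isOpen_Ioi (a := (0 : ℝ)))

theorem PointedCone.exists_positive_functional_nonpos (S : PointedCone ℝ C(K, ℝ))
    (hS : ∀ g ∈ S, ∃ x, g x ≤ 0) :
    ∃ L : StrongDual ℝ C(K, ℝ), (∀ f, 0 ≤ f → 0 ≤ L f) ∧ L 1 = 1 ∧ ∀ g ∈ S, L g ≤ 0 := by
  have hdisj : Disjoint {g : C(K, ℝ) | ∀ x, 0 < g x} S := by
    refine Set.disjoint_left.2 fun g hg hgS => ?_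
    obtain ⟨x, hx⟩ := hS g hgS
    exact (hg x).not_ge hx
  obtain ⟨L, u, hPosu, hSu⟩ := geometric_hahn_banach_open ContinuousMap.convex_setOf_forall_pos
    ContinuousMap.isOpen_setOf_forall_pos S.convex hdisj
  have hu : u ≤ 0 := by simpa using hSu 0 S.zero_mem
  have hL1 : L 1 < 0 := (hPosu 1 fun _ => one_pos).trans_le hu
  have hLS : ∀ g ∈ S, 0 ≤ L g := by
    intro g hg
    by_contra! hneg
    have := hSu _ (S.smul_mem (div_nonneg_of_nonpos (by linarith : u - 1 ≤ 0) hneg.le) hg)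
    rw [_root_.map_smul, smul_eq_mul, div_mul_cancel₀ _ hneg.ne] at this
    linarith
  have hLnonpos : ∀ f, 0 ≤ f → L f ≤ 0 := by
    intro f hf
    by_contra! hpos
    have := hPosu ((-L 1 / L f) • f + 1) fun x => by
      simp only [ContinuousMap.add_apply, ContinuousMap.smul_apply, ContinuousMap.one_apply,
        smul_eq_mul]
      have : 0 ≤ -L 1 / L f * f x := mul_nonneg (div_nonneg (by linarith) hpos.le) (hf x)
      linarith
    rw [map_add, _root_.map_smul, smul_eq_mul, div_mul_cancel₀ _ hpos.ne'] at this
    linarith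
  have hc : 0 ≤ (-L 1)⁻¹ := inv_nonneg.2 (neg_nonneg.2 hL1.le)
  refine ⟨(-L 1)⁻¹ • -L, fun f hf => ?_, ?_, fun g hg => ?_⟩
  · simpa using mul_nonneg hc (neg_nonneg.2 (hLnonpos f hf))
  · simp [hL1.ne]
  · simpa using mul_nonpos_of_nonneg_of_nonpos hc (neg_nonpos.2 (hLS g hg))

variable [T2Space K] [MeasurableSpace K] [BorelSpace K]

theorem exists_isFiniteMeasure_integral_eq (Λ : C(K, ℝ) →ₗ[ℝ] ℝ) (hΛ : ∀ f, 0 ≤ f → 0 ≤ Λ f) :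
    ∃ μ : Measure K, IsFiniteMeasure μ ∧ ∀ f : C(K, ℝ), ∫ x, f x ∂μ = Λ f := by
  let Λc : C_c(K, ℝ) →ₚ[ℝ] ℝ := PositiveLinearMap.mk₀
    { toFun := fun f => Λ (f : C(K, ℝ))
      map_add' := fun f g => map_add Λ (f : C(K, ℝ)) g
      map_smul' := fun c f => map_smul Λ c (f : C(K, ℝ)) }
    (fun f hf => hΛ _ hf)
  exact ⟨RealRMK.rieszMeasure Λc, inferInstance, fun f =>
    RealRMK.integral_rieszMeasure Λc (CompactlySupportedContinuousMap.continuousMapEquiv f)⟩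

theorem PointedCone.exists_isProbabilityMeasure_integral_nonpos (S : PointedCone ℝ C(K, ℝ))
    (hS : ∀ g ∈ S, ∃ x, g x ≤ 0) :
    ∃ μ : Measure K, IsProbabilityMeasure μ ∧ ∀ g ∈ S, ∫ x, g x ∂μ ≤ 0 := by
  obtain ⟨L, hL, hL1, hLS⟩ := S.exists_positive_functional_nonpos hS
  obtain ⟨μ, hμ, hμL⟩ := exists_isFiniteMeasure_integral_eq L.toLinearMap hL
  refine ⟨μ, ⟨?_⟩, fun g hg => (hμL g).trans_le (hLS g hg)⟩
  simpa [measureReal_def, hL1, ENNReal.toReal_eq_one_iff] using hμL 1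

end CompactSpace

variable {E F : Type*} [NormedAddCommGroup E] [NormedSpace ℝ E] [NormedAddCommGroup F]
  [NormedSpace ℝ F]

theorem dualBall_eq_preimage_closedBall :
    dualBall E = WeakDual.toStrongDual ⁻¹' Metric.closedBall 0 1 := by
  ext φ
  simp only [dualBall, mem_ofPred_eq, mem_preimage, mem_closedBall_zero_iff]
  refine ⟨fun hφ => ContinuousLinearMap.opNorm_le_bound _ zero_le_one fun x => by
    simpa using hφ x, fun hφ x => ?_⟩
  simpa using (WeakDual.toStrongDual φ).le_of_opNorm_le hφ x

instance : CompactSpace (dualBall E) := by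
  rw [← isCompact_iff_compactSpace, dualBall_eq_preimage_closedBall]
  exact WeakDual.isCompact_closedBall 0 1

instance : Nonempty (dualBall E) := ⟨⟨0, fun x => by
  rw [show (0 : WeakDual ℝ E) x = 0 from rfl, norm_zero]; exact norm_nonneg x⟩⟩

theorem continuous_norm_apply_rpow {p : ℝ} (hp : 0 ≤ p) (x : E) :
    Continuous fun φ : dualBall E => ‖(φ : WeakDual ℝ E) x‖ ^ p :=
  (((WeakDual.eval_continuous x).comp continuous_subtype_val).norm).rpow_const
    fun _ => Or.inr hp

theorem norm_rpow_inv_smul_rpow {p : ℝ} (hp : p ≠ 0) {W : Type*} [SeminormedAddCommGroup W]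
    [NormedSpace ℝ W] {c : ℝ} (hc : 0 ≤ c) (w : W) :
    ‖c ^ p⁻¹ • w‖ ^ p = c * ‖w‖ ^ p := by
  rw [norm_smul, Real.norm_of_nonneg (Real.rpow_nonneg hc _),
    Real.mul_rpow (Real.rpow_nonneg hc _) (norm_nonneg w), Real.rpow_inv_rpow hc hp]

noncomputable def pietschFun (p C : ℝ) (hp : 0 ≤ p) (T : E →L[ℝ] F) (x : E) :
    C(dualBall E, ℝ) :=
  ⟨fun φ => ‖T x‖ ^ p - C ^ p * ‖(φ : WeakDual ℝ E) x‖ ^ p,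
    continuous_const.sub (continuous_const.mul (continuous_norm_apply_rpow hp x))⟩

theorem pietschFun_apply (p C : ℝ) (hp : 0 ≤ p) (T : E →L[ℝ] F) (x : E) (φ : dualBall E) :
    pietschFun p C hp T x φ = ‖T x‖ ^ p - C ^ p * ‖(φ : WeakDual ℝ E) x‖ ^ p := rfl

theorem smul_pietschFun {p : ℝ} (C : ℝ) (hp : 0 < p) (T : E →L[ℝ] F) (x : E) {c : ℝ}
    (hc : 0 ≤ c) :
    c • pietschFun p C hp.le T x = pietschFun p C hp.le T (c ^ p⁻¹ • x) := by
  ext φ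
  rw [ContinuousMap.smul_apply, pietschFun_apply, pietschFun_apply, _root_.map_smul,
    _root_.map_smul, norm_rpow_inv_smul_rpow hp.ne' hc, norm_rpow_inv_smul_rpow hp.ne' hc,
    smul_eq_mul]
  ring

theorem exists_sum_pietschFun_nonpos {p C : ℝ} (hp : 0 < p) (hC : 0 ≤ C) {m : ℕ}
    (T : Fin m → E →L[ℝ] F) (x : Fin m → E)
    (h : (∑ i, ‖T i (x i)‖ ^ p) ^ (1 / p) ≤
      C * ⨆ φ : dualBall E, (∑ i, ‖(φ : WeakDual ℝ E) (x i)‖ ^ p) ^ (1 / p)) :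
    ∃ φ, ∑ i, pietschFun p C hp.le (T i) (x i) φ ≤ 0 := by
  set G : dualBall E → ℝ := fun φ => ∑ i, ‖(φ : WeakDual ℝ E) (x i)‖ ^ p
  have hG : Continuous G := continuous_finsetSum _ fun i _ => continuous_norm_apply_rpow hp.le _
  have hG0 : ∀ φ, 0 ≤ G φ := fun φ => Finset.sum_nonneg fun i _ => by positivity
  obtain ⟨φ₀, -, hφ₀⟩ := isCompact_univ.exists_isMaxOn univ_nonempty hG.continuousOn
  have hsup : ⨆ φ, G φ ^ (1 / p) ≤ G φ₀ ^ (1 / p) :=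
    ciSup_le fun φ => Real.rpow_le_rpow (hG0 φ) (hφ₀ (mem_univ φ)) (by positivity)
  have hsum : ∑ i, ‖T i (x i)‖ ^ p ≤ C ^ p * G φ₀ := by
    have := h.trans (mul_le_mul_of_nonneg_left hsup hC)
    rwa [one_div, Real.rpow_inv_le_iff_of_pos (Finset.sum_nonneg fun i _ => by positivity)
      (by positivity) hp, Real.mul_rpow hC (by positivity), Real.rpow_inv_rpow (hG0 φ₀) hp.ne']
      at this
  refine ⟨φ₀, ?_⟩
  simp only [pietschFun_apply, Finset.sum_sub_distrib, ← Finset.mul_sum]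
  exact sub_nonpos.2 hsum

theorem exists_nonpos_of_mem_hull_pietschFun {p C : ℝ} (hp : 0 < p) (hC : 0 ≤ C)
    {M : Set (E →L[ℝ] F)}
    (h : ∀ (m : ℕ) (T : Fin m → E →L[ℝ] F) (x : Fin m → E), (∀ i, T i ∈ M) →
      (∑ i, ‖T i (x i)‖ ^ p) ^ (1 / p) ≤
        C * ⨆ φ : dualBall E, (∑ i, ‖(φ : WeakDual ℝ E) (x i)‖ ^ p) ^ (1 / p))
    {g : C(dualBall E, ℝ)}
    (hg : g ∈ PointedCone.hull ℝ
      (range fun q : M × E => pietschFun p C hp.le (q.1 : E →L[ℝ] F) q.2)) :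
    ∃ φ, g φ ≤ 0 := by
  obtain ⟨n, c, q, rfl⟩ := Submodule.mem_span_set'.1 hg
  choose y hy using fun i => (q i).2
  have hsum : ∑ i, c i • (q i : C(dualBall E, ℝ)) =
      ∑ i, pietschFun p C hp.le ((y i).1 : E →L[ℝ] F) ((c i : ℝ) ^ p⁻¹ • (y i).2) := by
    refine Finset.sum_congr rfl fun i _ => ?_
    rw [← hy i]
    exact smul_pietschFun C hp _ _ (c i).2
  simpa [hsum] using exists_sum_pietschFun_nonpos hp hC _ _ (h n _ _ fun i => (y i).1.2)

theorem integral_pietschFun {p : ℝ} (C : ℝ) (hp : 0 ≤ p) (T : E →L[ℝ] F) (x : E)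
    (μ : Measure (dualBall E)) [IsProbabilityMeasure μ] :
    ∫ φ, pietschFun p C hp T x φ ∂μ =
      ‖T x‖ ^ p - C ^ p * ∫ φ, ‖(φ : WeakDual ℝ E) x‖ ^ p ∂μ := by
  simp only [pietschFun_apply]
  rw [integral_sub (integrable_const _), integral_const, integral_const_mul, probReal_univ,
    one_smul]
  exact ((continuous_norm_apply_rpow hp x).integrable_of_hasCompactSupport
    (HasCompactSupport.of_compactSpace _)).const_mul _

theorem stmt1 (p : ℝ) (hp : 1 ≤ p) (M : Set (X →L[ℝ] Y)) (C : ℝ) (hC : 0 ≤ C)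
    (h : ∀ (m : ℕ) (T : Fin m → X →L[ℝ] Y) (x : Fin m → X), (∀ i, T i ∈ M) →
      (∑ i, ‖T i (x i)‖ ^ p) ^ (1 / p) ≤
        C * ⨆ φ : dualBall X, (∑ i, ‖(φ : WeakDual ℝ X) (x i)‖ ^ p) ^ (1 / p)) :
    ∃ μ : Measure (dualBall X), IsFiniteMeasure μ ∧
      μ Set.univ ≤ ENNReal.ofReal (C ^ p) ∧ UniformlyDominatedBy p M μ := by
  have hp0 : 0 < p := by linarith
  obtain ⟨μ, hμ, hμS⟩ := PointedCone.exists_isProbabilityMeasure_integral_nonpos _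
    fun g hg => exists_nonpos_of_mem_hull_pietschFun hp0 hC h hg
  refine ⟨(C ^ p).toNNReal • μ, inferInstance, by simp [ENNReal.ofReal], fun T hT x => ?_⟩
  have hdom := hμS _ (PointedCone.subset_hull ⟨(⟨T, hT⟩, x), rfl⟩)
  rw [integral_pietschFun, sub_nonpos] at hdom
  rwa [integral_smul_nnreal_measure, NNReal.smul_def, Real.coe_toNNReal _ (by positivity),
    smul_eq_mul]
end
end

section
/- Let Y be a Banach space with no finite cotype and let M ⊆ Π_p(X,Y). If M is uniformly dominated by a measure μ, then for every C > μ(B_{X*})^{1/p}, every finite family T₁,...,Tₙ ∈ M and x₁,...,xₙ ∈ X, there exists an absolutely p-summing operator T : X → Y with π_p(T) ≤ C and ‖Tᵢ(xᵢ)‖ ≤ ‖T(xᵢ)‖ for all i = 1,...,n. -/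
open MeasureTheory

noncomputable section

variable {X : Type*} [NormedAddCommGroup X] [NormedSpace ℝ X] [CompleteSpace X]
variable {Y : Type*} [NormedAddCommGroup Y] [NormedSpace ℝ Y] [CompleteSpace Y]

/-!
Choose norming functionals `fᵢ` for the vectors `Tᵢ xᵢ` and put `u z = (fᵢ (Tᵢ z))ᵢ ∈ ℓ_∞^n`.
Each coordinate of `u` is dominated by `μ`, hence so is `u`, and the easy half of Pietsch's
domination theorem gives `π_p(u) ≤ μ(B_{X*})^{1/p}`. Composing with a `(1 + ε)`-isomorphic copy
`J` of `ℓ_∞^n` in `Y` yields `S = J ∘ u` with `π_p(S) ≤ (1 + ε) μ(B_{X*})^{1/p} ≤ C`, while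
`‖S xᵢ‖ ≥ ‖u xᵢ‖ ≥ fᵢ (Tᵢ xᵢ) = ‖Tᵢ xᵢ‖`.
-/

lemma pi_norm_rpow_le_iff_of_nonneg {ι : Type*} [Fintype ι] {G : ι → Type*}
    [∀ i, SeminormedAddGroup (G i)] {v : ∀ i, G i} {p r : ℝ}
    (hp : 0 < p) (hr : 0 ≤ r) : ‖v‖ ^ p ≤ r ↔ ∀ i, ‖v i‖ ^ p ≤ r := by
  simp only [← Real.le_rpow_inv_iff_of_pos (norm_nonneg _) hr hp]
  exact pi_norm_le_iff_of_nonneg (by positivity)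

section

variable {E : Type*} [NormedAddCommGroup E] [NormedSpace ℝ E]
  {F : Type*} [NormedAddCommGroup F] [NormedSpace ℝ F]
  {G : Type*} [NormedAddCommGroup G] [NormedSpace ℝ G] {p : ℝ}

lemma exists_clm_pi_apply_eq_norm {ι : Type*} (T : ι → E →L[ℝ] F) (x : ι → E) :
    ∃ u : E →L[ℝ] (ι → ℝ), (∀ z i, ‖u z i‖ ≤ ‖T i z‖) ∧ ∀ i, u (x i) i = ‖T i (x i)‖ := by
  choose f hf_norm hf_apply using fun i => exists_dual_vector'' ℝ (T i (x i))
  refine ⟨ContinuousLinearMap.pi fun i => (f i).comp (T i), fun z i => ?_, hf_apply⟩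
  exact ((f i).le_of_opNorm_le (hf_norm i) _).trans_eq (one_mul _)

lemma integrable_norm_apply_rpow (hp : 0 ≤ p) (μ : Measure (dualBall E)) [IsFiniteMeasure μ]
    (z : E) : Integrable (fun φ : dualBall E => ‖(φ : WeakDual ℝ E) z‖ ^ p) μ := by
  have hcont : Continuous fun φ : dualBall E => ‖(φ : WeakDual ℝ E) z‖ ^ p :=
    ((WeakDual.eval_continuous z).comp continuous_subtype_val).norm.rpow_const
      fun _ => Or.inr hp
  refine (integrable_const (‖z‖ ^ p)).mono' hcont.aestronglyMeasurable
    (Filter.Eventually.of_forall fun φ => ?_)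
  rw [Real.norm_of_nonneg (by positivity)]
  exact Real.rpow_le_rpow (norm_nonneg _) (φ.2 z) hp

/-- The weak `ℓ_p` norm of a finite family, as it appears on the right of `SummingWith`. -/
def weakNorm {ι : Type*} [Fintype ι] (p : ℝ) (y : ι → E) : ℝ :=
  ⨆ φ : dualBall E, (∑ i, ‖(φ : WeakDual ℝ E) (y i)‖ ^ p) ^ (1 / p)

lemma weakNorm_nonneg {ι : Type*} [Fintype ι] (y : ι → E) : 0 ≤ weakNorm p y :=
  Real.iSup_nonneg fun _ => by positivity

lemma sum_rpow_le_weakNorm_rpow {ι : Type*} [Fintype ι] (hp : 0 < p) (y : ι → E)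
    (φ : dualBall E) : ∑ i, ‖(φ : WeakDual ℝ E) (y i)‖ ^ p ≤ weakNorm p y ^ p := by
  have hbdd : BddAbove (Set.range fun ψ : dualBall E =>
      (∑ i, ‖(ψ : WeakDual ℝ E) (y i)‖ ^ p) ^ (1 / p)) := by
    refine ⟨(∑ i, ‖y i‖ ^ p) ^ (1 / p), ?_⟩
    rintro _ ⟨ψ, rfl⟩
    dsimp only
    gcongr with i
    exact ψ.2 (y i)
  rw [← Real.rpow_inv_le_iff_of_pos (by positivity) (weakNorm_nonneg y) hp, ← one_div]
  exact le_ciSup hbdd φ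

lemma SummingWith.mono {T : E →L[ℝ] F} {C D : ℝ} (h : SummingWith p T C) (hCD : C ≤ D) :
    SummingWith p T D :=
  fun _ y => (h _ y).trans (mul_le_mul_of_nonneg_right hCD (weakNorm_nonneg y))

lemma SummingWith.clm_comp (hp : 0 < p) {T : E →L[ℝ] F} {C : ℝ} (h : SummingWith p T C)
    (J : F →L[ℝ] G) : SummingWith p (J.comp T) (‖J‖ * C) := by
  intro m y
  calc (∑ j, ‖J (T (y j))‖ ^ p) ^ (1 / p)
      ≤ (‖J‖ ^ p * ∑ j, ‖T (y j)‖ ^ p) ^ (1 / p) := by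
        gcongr
        rw [Finset.mul_sum]
        gcongr with j
        rw [← Real.mul_rpow (norm_nonneg _) (norm_nonneg _)]
        gcongr
        exact J.le_opNorm _
    _ = ‖J‖ * (∑ j, ‖T (y j)‖ ^ p) ^ (1 / p) := by
        rw [Real.mul_rpow (by positivity) (by positivity), ← Real.rpow_mul (norm_nonneg _),
          mul_one_div_cancel hp.ne', Real.rpow_one]
    _ ≤ ‖J‖ * (C * weakNorm p y) := by gcongr; exact h m y
    _ = ‖J‖ * C * weakNorm p y := by ring

/-- The easy half of Pietsch's domination theorem. -/
lemma summingWith_of_norm_rpow_le_integral (hp : 0 < p) (μ : Measure (dualBall E))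
    [IsFiniteMeasure μ] {T : E →L[ℝ] F}
    (hT : ∀ z, ‖T z‖ ^ p ≤ ∫ φ : dualBall E, ‖(φ : WeakDual ℝ E) z‖ ^ p ∂μ) :
    SummingWith p T ((μ Set.univ).toReal ^ (1 / p)) := by
  intro m y
  have hint : ∀ j ∈ Finset.univ, Integrable
      (fun φ : dualBall E => ‖(φ : WeakDual ℝ E) (y j)‖ ^ p) μ :=
    fun j _ => integrable_norm_apply_rpow hp.le μ (y j)
  have hsum : ∑ j, ‖T (y j)‖ ^ p ≤ (μ Set.univ).toReal * weakNorm p y ^ p :=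
    calc ∑ j, ‖T (y j)‖ ^ p
        ≤ ∑ j, ∫ φ : dualBall E, ‖(φ : WeakDual ℝ E) (y j)‖ ^ p ∂μ :=
          Finset.sum_le_sum fun j _ => hT (y j)
      _ = ∫ φ : dualBall E, ∑ j, ‖(φ : WeakDual ℝ E) (y j)‖ ^ p ∂μ :=
          (integral_finsetSum _ hint).symm
      _ ≤ ∫ _ : dualBall E, weakNorm p y ^ p ∂μ :=
          integral_mono (integrable_finsetSum _ hint) (integrable_const _)
            (sum_rpow_le_weakNorm_rpow hp y)
      _ = (μ Set.univ).toReal * weakNorm p y ^ p := by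
          rw [integral_const, smul_eq_mul, measureReal_def]
  calc (∑ j, ‖T (y j)‖ ^ p) ^ (1 / p)
      ≤ ((μ Set.univ).toReal * weakNorm p y ^ p) ^ (1 / p) := by gcongr
    _ = (μ Set.univ).toReal ^ (1 / p) * weakNorm p y := by
        rw [Real.mul_rpow (by positivity) (Real.rpow_nonneg (weakNorm_nonneg y) _),
          ← Real.rpow_mul (weakNorm_nonneg y), mul_one_div_cancel hp.ne', Real.rpow_one]

lemma piNorm_le {T : E →L[ℝ] F} {C : ℝ} (hC : 0 ≤ C) (h : SummingWith p T C) :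
    piNorm p T ≤ C :=
  csInf_le ⟨0, fun _ hb => hb.1⟩ ⟨hC, h⟩

end

theorem stmt4_general (p : ℝ) (hp : 1 ≤ p)
    (hY : ∀ ε : ℝ, 0 < ε → ∀ n : ℕ, ∃ J : (Fin n → ℝ) →L[ℝ] Y,
      (∀ c, ‖c‖ ≤ ‖J c‖) ∧ ‖J‖ ≤ 1 + ε)
    (M : Set (X →L[ℝ] Y))
    (μ : Measure (dualBall X)) [IsFiniteMeasure μ]
    (hdom : UniformlyDominatedBy p M μ) :
    ∀ C : ℝ, (μ Set.univ).toReal ^ (1 / p) < C →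
      ∀ (n : ℕ) (T : Fin n → X →L[ℝ] Y) (x : Fin n → X), (∀ i, T i ∈ M) →
        ∃ S : X →L[ℝ] Y, AbsolutelySumming p S ∧ piNorm p S ≤ C ∧
          ∀ i, ‖T i (x i)‖ ≤ ‖S (x i)‖ := by
  intro C hC n T x hTM
  have hp0 : 0 < p := zero_lt_one.trans_le hp
  set a := (μ Set.univ).toReal ^ (1 / p)
  have ha : 0 ≤ a := by positivity
  have hC0 : 0 ≤ C := ha.trans hC.le
  obtain ⟨u, hu_le, hu_eq⟩ := exists_clm_pi_apply_eq_norm T x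
  have hu_dom : ∀ z, ‖u z‖ ^ p ≤ ∫ φ : dualBall X, ‖(φ : WeakDual ℝ X) z‖ ^ p ∂μ :=
    fun z => (pi_norm_rpow_le_iff_of_nonneg hp0 (integral_nonneg fun _ => by positivity)).2
      fun i => (Real.rpow_le_rpow (norm_nonneg _) (hu_le z i) hp0.le).trans (hdom _ (hTM i) z)
  obtain ⟨ε, hε, hεC⟩ : ∃ ε > 0, (1 + ε) * a ≤ C := by
    refine ⟨(C - a) / (a + 1), by have := sub_pos.2 hC; positivity, ?_⟩
    have : (C - a) / (a + 1) * a ≤ C - a := by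
      rw [div_mul_eq_mul_div, div_le_iff₀ (by positivity)]
      nlinarith
    linarith
  obtain ⟨J, hJ_ge, hJ_le⟩ := hY ε hε n
  have hS : SummingWith p (J.comp u) C :=
    ((summingWith_of_norm_rpow_le_integral hp0 μ hu_dom).clm_comp hp0 J).mono
      ((mul_le_mul_of_nonneg_right hJ_le ha).trans hεC)
  refine ⟨J.comp u, ⟨C, hC0, hS⟩, piNorm_le hC0 hS, fun i => ?_⟩
  calc ‖T i (x i)‖ = ‖u (x i) i‖ := by rw [hu_eq, norm_norm]
    _ ≤ ‖u (x i)‖ := norm_le_pi_norm _ i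
    _ ≤ ‖J (u (x i))‖ := hJ_ge _

theorem stmt4 (p : ℝ) (hp : 1 ≤ p)
    (hY : ∀ ε : ℝ, 0 < ε → ∀ n : ℕ, ∃ J : (Fin n → ℝ) →L[ℝ] Y,
      (∀ c, ‖c‖ ≤ ‖J c‖) ∧ ‖J‖ ≤ 1 + ε)
    (M : Set (X →L[ℝ] Y)) (hM : ∀ T ∈ M, AbsolutelySumming p T)
    (μ : Measure (dualBall X)) [IsFiniteMeasure μ]
    (hdom : UniformlyDominatedBy p M μ) :
    ∀ C : ℝ, (μ Set.univ).toReal ^ (1 / p) < C →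
      ∀ (n : ℕ) (T : Fin n → X →L[ℝ] Y) (x : Fin n → X), (∀ i, T i ∈ M) →
        ∃ S : X →L[ℝ] Y, AbsolutelySumming p S ∧ piNorm p S ≤ C ∧
          ∀ i, ‖T i (x i)‖ ≤ ‖S (x i)‖ :=
  stmt4_general p hp hY M μ hdom
end
end
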